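/- arXiv:1906.06209 — 2 statements merged into one kernel-verified Lean document; each statement's English description precedes it below -/
import Mathlib

section
/- Let α ∈ ℝ, z = e^{iα}, N ≥ 1, and let (N0,N1,N2) be nonnegative integers with N0+N1+N2 = N. If J, K : Fin N → Fin 2 take the value 1 the same number of times, then ∑_{L ∈ [N0,N1,N2]} ∏_{p<N} (A'_α)_{J(p),L(p)} = ∑_{L ∈ [N0,N1,N2]} ∏_{p<N} (A'_α)_{K(p),L(p)}; i.e., rows of B_{α,N} whose binary labels have the same number of ones are identical. -/
open Complex Finset

/-- The matrix `A'_α` with rows `(1, 0, -e^{2iα})` and `(0, 1, e^{iα})`. -/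
noncomputable def Amat' (α : ℝ) : Matrix (Fin 2) (Fin 3) ℂ :=
  !![1, 0, -Complex.exp (α * Complex.I) ^ 2;
     0, 1, Complex.exp (α * Complex.I)]

/-- The number of coordinates of `L` equal to `i`. -/
def cnt {N : ℕ} (L : Fin N → Fin 3) (i : Fin 3) : ℕ :=
  (Finset.univ.filter fun p => L p = i).card

/-! Permuting the positions `p` of a row label `J` permutes the factors of each product
`∏ p, A (J p) (L p)` together with the positions of `L`; since the summation range is closed
under permuting positions, the sum does not change. Two binary labels with the same number of
ones differ by such a permutation. -/

theorem exists_perm_comp_eq_of_card_filter_eq_one {ι : Type*} [Fintype ι] (J K : ι → Fin 2)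
    (h : #{p | J p = 1} = #{p | K p = 1}) : ∃ σ : Equiv.Perm ι, J ∘ σ = K := by
  classical
  have hcard : Fintype.card {p // K p = 1} = Fintype.card {p // J p = 1} := by
    simpa only [Fintype.card_subtype] using h.symm
  obtain ⟨e⟩ := Fintype.card_eq.mp hcard
  refine ⟨e.extendSubtype, funext fun p => ?_⟩
  by_cases hp : K p = 1
  · rw [Function.comp_apply, e.extendSubtype_mem p hp, hp]
  · have := e.extendSubtype_not_mem p hp
    rw [Function.comp_apply]
    omega

theorem sum_prod_comp_perm {ι m n R : Type*} [Fintype ι] [CommSemiring R]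
    (A : Matrix m n R) (J : ι → m) (σ : Equiv.Perm ι) (S : Finset (ι → n))
    (hS : ∀ L, L ∘ σ ∈ S ↔ L ∈ S) :
    ∑ L ∈ S, ∏ p, A (J (σ p)) (L p) = ∑ L ∈ S, ∏ p, A (J p) (L p) := by
  refine sum_nbij' (fun L => L ∘ σ.symm) (fun L => L ∘ σ) (fun L hL => ?_)
    (fun L hL => (hS L).mpr hL) (fun L _ => ?_) (fun L _ => ?_) (fun L _ => ?_)
  · rwa [← hS, Function.comp_assoc, Equiv.symm_comp_self, Function.comp_id]
  · simp [Function.comp_assoc]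
  · simp [Function.comp_assoc]
  · conv_rhs => rw [← Equiv.prod_comp σ]
    simp

theorem cnt_comp_perm {N : ℕ} (L : Fin N → Fin 3) (σ : Equiv.Perm (Fin N)) (i : Fin 3) :
    cnt (L ∘ σ) i = cnt L i :=
  card_equiv σ fun p => by simp

theorem B_rows_eq_general (α : ℝ) (N : ℕ) (N0 N1 N2 : ℕ)
    (J K : Fin N → Fin 2)
    (hJK : (Finset.univ.filter fun p => J p = 1).card =
           (Finset.univ.filter fun p => K p = 1).card) :
    ∑ L ∈ Finset.univ.filter
        (fun L : Fin N → Fin 3 => cnt L 0 = N0 ∧ cnt L 1 = N1 ∧ cnt L 2 = N2),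
      ∏ p : Fin N, Amat' α (J p) (L p) =
    ∑ L ∈ Finset.univ.filter
        (fun L : Fin N → Fin 3 => cnt L 0 = N0 ∧ cnt L 1 = N1 ∧ cnt L 2 = N2),
      ∏ p : Fin N, Amat' α (K p) (L p) := by
  obtain ⟨σ, rfl⟩ := exists_perm_comp_eq_of_card_filter_eq_one J K hJK
  refine (sum_prod_comp_perm (Amat' α) J σ _ fun L => ?_).symm
  simp only [mem_filter, mem_univ, true_and, cnt_comp_perm]

/-- Rows of `B_{α,N}` whose binary labels have the same number of ones are
identical. -/
theorem B_rows_eq (α : ℝ) (N : ℕ) (hN : 1 ≤ N) (N0 N1 N2 : ℕ)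
    (hsum : N0 + N1 + N2 = N) (J K : Fin N → Fin 2)
    (hJK : (Finset.univ.filter fun p => J p = 1).card =
           (Finset.univ.filter fun p => K p = 1).card) :
    ∑ L ∈ Finset.univ.filter
        (fun L : Fin N → Fin 3 => cnt L 0 = N0 ∧ cnt L 1 = N1 ∧ cnt L 2 = N2),
      ∏ p : Fin N, Amat' α (J p) (L p) =
    ∑ L ∈ Finset.univ.filter
        (fun L : Fin N → Fin 3 => cnt L 0 = N0 ∧ cnt L 1 = N1 ∧ cnt L 2 = N2),
      ∏ p : Fin N, Amat' α (K p) (L p) :=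
  B_rows_eq_general α N N0 N1 N2 J K hJK
end

section
/- Let N ≥ 1 and α ∈ [π/2, π]. If there exists x : (Fin N → Fin 3) → ℝ with all entries nonnegative, x ≠ 0, and A_α^{⊗N} x = 0, then α ≥ π/2 + π/(2N). Equivalently, for every α ∈ [π/2, π/2 + π/(2N)), the only nonnegative real solution of A_α^{⊗N} x = 0 is x = 0. -/
/-!
Suppose `α < π/2 + π/(2N)` and pick `φ` with `2α - π < φ < π/N`. The covector
`c = (1, e^{i(φ-α)})` turns `A_α` into the row `b = c A_α = (1, 2 cos(α - φ/2) e^{iφ/2}, e^{iφ})`,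
whose entries all have argument in `[0, φ]`. Pairing `A_α^{⊗N} x = 0` with `c^{⊗N}` gives
`∑_L x_L b_{L_1} ⋯ b_{L_N} = 0`, and each product has argument in `[0, Nφ]` with `Nφ < π`, so after a
rotation by `-Nφ/2` all of them have positive real part. A nonnegative combination of such numbers
vanishes only if every coefficient does.
-/

open Complex Real Finset

/-- The matrix `A_α` with rows `(1, e^{iα}, 0)` and `(0, 1, e^{iα})`. -/
noncomputable def Amat (α : ℝ) : Matrix (Fin 2) (Fin 3) ℂ :=
  !![1, Complex.exp (α * Complex.I), 0;
     0, 1, Complex.exp (α * Complex.I)]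

def sector (φ : ℝ) : Set ℂ :=
  {z | ∃ r : ℝ, 0 < r ∧ ∃ θ ∈ Set.Icc 0 φ, z = r * exp (θ * I)}

theorem exp_mul_I_mem_sector {θ φ : ℝ} (hθ : θ ∈ Set.Icc 0 φ) : exp (θ * I) ∈ sector φ :=
  ⟨1, one_pos, θ, hθ, by simp⟩

theorem mul_mem_sector {z w : ℂ} {φ ψ : ℝ} (hz : z ∈ sector φ) (hw : w ∈ sector ψ) :
    z * w ∈ sector (φ + ψ) := by
  obtain ⟨r, hr, θ, ⟨hθ0, hθφ⟩, rfl⟩ := hz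
  obtain ⟨s, hs, η, ⟨hη0, hηψ⟩, rfl⟩ := hw
  refine ⟨r * s, mul_pos hr hs, θ + η, ⟨by linarith, by linarith⟩, ?_⟩
  push_cast
  rw [add_mul, Complex.exp_add]
  ring

theorem prod_mem_sector {ι : Type*} (s : Finset ι) {z : ι → ℂ} {φ : ℝ}
    (hz : ∀ i ∈ s, z i ∈ sector φ) : ∏ i ∈ s, z i ∈ sector (#s * φ) := by
  classical
  induction s using Finset.induction_on with
  | empty => simpa using exp_mul_I_mem_sector (φ := 0) ⟨le_rfl, le_rfl⟩
  | insert a s ha ih =>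
    rw [prod_insert ha, card_insert_of_notMem ha, Nat.cast_succ, add_one_mul, add_comm]
    exact mul_mem_sector (hz a (mem_insert_self a s))
      (ih fun i hi => hz i (mem_insert_of_mem hi))

theorem re_pos_of_mem_sector {z : ℂ} {φ : ℝ} (hz : z ∈ sector φ) (hφ : φ < π) :
    0 < (exp (-(φ / 2 : ℝ) * I) * z).re := by
  obtain ⟨r, hr, θ, ⟨hθ0, hθφ⟩, rfl⟩ := hz
  rw [mul_left_comm, ← Complex.exp_add, ← add_mul, ← ofReal_neg, ← ofReal_add, re_ofReal_mul,
    exp_ofReal_mul_I_re]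
  exact mul_pos hr (cos_pos_of_mem_Ioo ⟨by linarith, by linarith⟩)

theorem eq_zero_of_sum_mul_eq_zero_of_re_pos {ι : Type*} [Fintype ι] {w : ι → ℝ}
    (hw : ∀ i, 0 ≤ w i) {z : ι → ℂ} (hz : ∀ i, 0 < (z i).re)
    (h : ∑ i, (w i : ℂ) * z i = 0) : w = 0 := by
  have hre : ∑ i, w i * (z i).re = 0 := by simpa [re_sum] using congrArg re h
  funext i
  have hi := (sum_eq_zero_iff_of_nonneg fun j _ => mul_nonneg (hw j) (hz j).le).1 hre i
    (mem_univ i)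
  exact (mul_eq_zero.1 hi).resolve_right (hz i).ne'

theorem eq_zero_of_sum_mul_eq_zero_of_mem_sector {ι : Type*} [Fintype ι] {w : ι → ℝ}
    (hw : ∀ i, 0 ≤ w i) {z : ι → ℂ} {φ : ℝ} (hφ : φ < π) (hz : ∀ i, z i ∈ sector φ)
    (h : ∑ i, (w i : ℂ) * z i = 0) : w = 0 := by
  refine eq_zero_of_sum_mul_eq_zero_of_re_pos hw (fun i => re_pos_of_mem_sector (hz i) hφ) ?_
  simp_rw [mul_left_comm (w _ : ℂ), ← mul_sum, h, mul_zero]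

theorem sum_mul_prod_vecMul_eq_zero {R ι m n : Type*} [CommSemiring R] [Fintype ι]
    [DecidableEq ι] [Fintype m] [Fintype n] (A : Matrix m n R) {x : (ι → n) → R}
    (hx : ∀ J : ι → m, ∑ L, x L * ∏ p, A (J p) (L p) = 0) (c : m → R) :
    ∑ L, x L * ∏ p, Matrix.vecMul c A (L p) = 0 := by
  simp_rw [Matrix.vecMul, dotProduct, Fintype.prod_sum, mul_sum, prod_mul_distrib]
  rw [sum_comm]
  refine sum_eq_zero fun J _ => ?_
  simp_rw [mul_left_comm (x _), ← mul_sum, hx J, mul_zero]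

theorem vecMul_Amat_mem_sector {α φ : ℝ} (hφ : 0 ≤ φ) (hlo : 2 * α - π < φ)
    (hhi : φ < 2 * α + π) (j : Fin 3) :
    Matrix.vecMul ![1, exp ((φ - α : ℝ) * I)] (Amat α) j ∈ sector φ := by
  fin_cases j
  · simpa [Amat, Matrix.vecMul, dotProduct] using exp_mul_I_mem_sector ⟨le_rfl, hφ⟩
  · refine ⟨2 * Real.cos (α - φ / 2),
      mul_pos two_pos (cos_pos_of_mem_Ioo ⟨by linarith, by linarith⟩),
      φ / 2, ⟨by linarith, by linarith⟩, ?_⟩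
    have hmid : Matrix.vecMul ![1, exp ((φ - α : ℝ) * I)] (Amat α) 1
        = exp (α * I) + exp ((φ - α : ℝ) * I) := by
      simp [Amat, Matrix.vecMul, dotProduct]
    refine hmid.trans ?_
    push_cast
    rw [two_cos, add_mul, ← Complex.exp_add, ← Complex.exp_add]
    ring_nf
  · simpa [Amat, Matrix.vecMul, dotProduct, ← Complex.exp_add, ← add_mul] using
      exp_mul_I_mem_sector ⟨hφ, le_rfl⟩

/-- Necessity: if `A_α^{⊗N} x = 0` has a nontrivial nonnegative solution with
`α ∈ [π/2, π]`, then `α ≥ π/2 + π/(2N)`. -/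
theorem nns_necessity (N : ℕ) (hN : 1 ≤ N) (α : ℝ) (hα : α ∈ Set.Icc (π / 2) π)
    (x : (Fin N → Fin 3) → ℝ) (hx0 : ∀ L, 0 ≤ x L) (hxne : x ≠ 0)
    (hx : ∀ J : Fin N → Fin 2,
      ∑ L : Fin N → Fin 3, (x L : ℂ) * ∏ p : Fin N, Amat α (J p) (L p) = 0) :
    π / 2 + π / (2 * N) ≤ α := by
  by_contra! hlt
  have hNpos : (0 : ℝ) < N := by exact_mod_cast hN
  obtain ⟨φ, hlo, hhi⟩ : ∃ φ, 2 * α - π < φ ∧ φ < π / N :=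
    exists_between (by rw [show π / N = 2 * (π / (2 * N)) by field_simp]; linarith)
  have hNφ : N * φ < π := by rw [mul_comm]; exact (lt_div_iff₀ hNpos).1 hhi
  have hφπ : φ ≤ π := hhi.le.trans (div_le_self pi_pos.le (by exact_mod_cast hN))
  have hb := vecMul_Amat_mem_sector (by linarith [hα.1]) hlo (by linarith [hα.1])
  have hsum := sum_mul_prod_vecMul_eq_zero (Amat α) hx ![1, exp ((φ - α : ℝ) * I)]
  refine hxne (eq_zero_of_sum_mul_eq_zero_of_mem_sector hx0 hNφ (fun L => ?_) hsum)
  simpa using prod_mem_sector univ fun p _ => hb (L p)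
end
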